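/- arXiv:1010.4256 — 2 statements merged into one kernel-verified Lean document; each statement's English description precedes it below -/
import Mathlib

section
/- The scalar curvature R of the graph metric g = δ + df ⊗ df on ℝⁿ satisfies R = (1/(1+|∇f|²)) [ f_{ii} f_{jj} − f_{ij} f_{ij} − (2 f_j f_k/(1+|∇f|²)) ( f_{ii} f_{jk} − f_{ij} f_{ik} ) ], with summation over repeated indices. -/
open MeasureTheory Filter
open scoped Topology

noncomputable section

/-- The `i`-th partial derivative of `f` on `ℝⁿ`. -/
def pd {n : ℕ} (f : EuclideanSpace ℝ (Fin n) → ℝ) (i : Fin n)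
    (x : EuclideanSpace ℝ (Fin n)) : ℝ :=
  fderiv ℝ f x (EuclideanSpace.single i 1)

/-- Second partial derivatives `f_{ij}`. -/
def pd2 {n : ℕ} (f : EuclideanSpace ℝ (Fin n) → ℝ) (i j : Fin n)
    (x : EuclideanSpace ℝ (Fin n)) : ℝ :=
  pd (pd f i) j x

/-- `|∇f|²`, the squared Euclidean norm of the gradient of `f`. -/
def gradSq {n : ℕ} (f : EuclideanSpace ℝ (Fin n) → ℝ)
    (x : EuclideanSpace ℝ (Fin n)) : ℝ :=
  ∑ i, (pd f i x) ^ 2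

/-- The scalar curvature of the graph of `f`, in the coordinate form
`R = (1/(1+|∇f|²)) [ f_{ii}f_{jj} - f_{ij}f_{ij} - (2 f_j f_k/(1+|∇f|²))(f_{ii}f_{jk} - f_{ij}f_{ik}) ]`. -/
def Rsc {n : ℕ} (f : EuclideanSpace ℝ (Fin n) → ℝ)
    (x : EuclideanSpace ℝ (Fin n)) : ℝ :=
  (1 + gradSq f x)⁻¹ *
    ((∑ i, pd2 f i i x) ^ 2 - (∑ i, ∑ j, (pd2 f i j x) ^ 2)
      - 2 / (1 + gradSq f x) *
        ∑ j, ∑ k, pd f j x * pd f k x *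
          ((∑ i, pd2 f i i x) * pd2 f j k x - ∑ i, pd2 f i j x * pd2 f i k x))


/-- The Christoffel symbols `Γ_{ij}^k = f_{ij} f_k/(1+|∇f|²)` of the graph metric. -/
def Gam {n : ℕ} (f : EuclideanSpace ℝ (Fin n) → ℝ) (i j k : Fin n)
    (x : EuclideanSpace ℝ (Fin n)) : ℝ :=
  pd2 f i j x * pd f k x / (1 + gradSq f x)


variable {n : ℕ} {f g h : EuclideanSpace ℝ (Fin n) → ℝ} {x : EuclideanSpace ℝ (Fin n)}

theorem contDiff_pd (hf : ContDiff ℝ (⊤ : ℕ∞) f) (i : Fin n) : ContDiff ℝ (⊤ : ℕ∞) (pd f i) :=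
  (hf.fderiv_right (le_refl _)).clm_apply contDiff_const

theorem contDiff_pd2 (hf : ContDiff ℝ (⊤ : ℕ∞) f) (i j : Fin n) : ContDiff ℝ (⊤ : ℕ∞) (pd2 f i j) :=
  contDiff_pd (contDiff_pd hf i) j

theorem contDiff_gradSq (hf : ContDiff ℝ (⊤ : ℕ∞) f) : ContDiff ℝ (⊤ : ℕ∞) (gradSq f) := by
  have : gradSq f = fun y => ∑ i, (pd f i y) ^ 2 := rfl
  rw [this]
  exact ContDiff.sum fun i _ => (contDiff_pd hf i).pow 2

theorem u_pos (f : EuclideanSpace ℝ (Fin n) → ℝ) (x : EuclideanSpace ℝ (Fin n)) :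
    0 < 1 + gradSq f x := by
  have : 0 ≤ gradSq f x := Finset.sum_nonneg fun i _ => sq_nonneg _
  linarith

theorem u_ne (f : EuclideanSpace ℝ (Fin n) → ℝ) (x : EuclideanSpace ℝ (Fin n)) :
    1 + gradSq f x ≠ 0 := ne_of_gt (u_pos f x)

-- toolkit (proved in a.lean, just restated here assuming they compile together later)
theorem pd_mul (hg : DifferentiableAt ℝ g x) (hh : DifferentiableAt ℝ h x) (i : Fin n) :
    pd (fun y => g y * h y) i x = pd g i x * h x + g x * pd h i x := by
  unfold pd; rw [fderiv_fun_mul hg hh]; simp [mul_comm]; ring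

theorem pd_inv (hg : DifferentiableAt ℝ g x) (hx : g x ≠ 0) (i : Fin n) :
    pd (fun y => (g y)⁻¹) i x = -pd g i x / g x ^ 2 := by
  unfold pd
  have : HasFDerivAt (fun y => (g y)⁻¹) ((-(g x ^ 2)⁻¹) • fderiv ℝ g x) x :=
    (hasDerivAt_inv hx).comp_hasFDerivAt x hg.hasFDerivAt
  rw [this.fderiv]; simp [div_eq_mul_inv]; ring

theorem pd_sum {ι : Type*} (s : Finset ι) (F : ι → EuclideanSpace ℝ (Fin n) → ℝ)
    (hF : ∀ j ∈ s, DifferentiableAt ℝ (F j) x) (i : Fin n) :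
    pd (fun y => ∑ j ∈ s, F j y) i x = ∑ j ∈ s, pd (F j) i x := by
  unfold pd; rw [fderiv_fun_sum hF]; simp

theorem pd_sq (hg : DifferentiableAt ℝ g x) (i : Fin n) :
    pd (fun y => g y ^ 2) i x = 2 * g x * pd g i x := by
  have : (fun y => g y ^ 2) = fun y => g y * g y := by funext y; ring
  rw [this, pd_mul hg hg]; ring

theorem pd_const_add (c : ℝ) (i : Fin n) :
    pd (fun y => c + g y) i x = pd g i x := by
  unfold pd; rw [fderiv_const_add]

theorem pd_symm (hf : ContDiff ℝ (⊤ : ℕ∞) f) (i j : Fin n) :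
    pd (pd f i) j x = pd (pd f j) i x := by
  have hd : DifferentiableAt ℝ (fderiv ℝ f) x :=
    ((hf.fderiv_right (m := 1) (WithTop.coe_le_coe.mpr le_top)).differentiable one_ne_zero).differentiableAt
  have h1 : ∀ k m : Fin n, pd (pd f k) m x
      = fderiv ℝ (fderiv ℝ f) x (EuclideanSpace.single m 1) (EuclideanSpace.single k 1) := by
    intro k m
    unfold pd
    rw [fderiv_clm_apply hd (differentiableAt_const _)]
    simp
  rw [h1, h1]
  exact (hf.contDiffAt.isSymmSndFDerivAt (by rw [minSmoothness_of_isRCLikeNormedField]; exact WithTop.coe_le_coe.mpr (le_top : (2:ℕ∞) ≤ ⊤))) _ _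

theorem pd_gradSq (hf : ContDiff ℝ (⊤ : ℕ∞) f) (m : Fin n) :
    pd (gradSq f) m x = ∑ r, 2 * pd f r x * pd2 f r m x := by
  have h1 : gradSq f = fun y => ∑ r, (pd f r y) ^ 2 := rfl
  rw [h1, pd_sum _ _ (fun r _ => ((contDiff_pd hf r).pow 2).differentiable (by simp) |>.differentiableAt) m]
  exact Finset.sum_congr rfl fun r _ =>
    pd_sq ((contDiff_pd hf r).differentiable (by simp)).differentiableAt m

theorem pd_Gam (hf : ContDiff ℝ (⊤ : ℕ∞) f) (i j k m : Fin n) :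
    pd (Gam f i j k) m x =
      ((pd (pd2 f i j) m x * pd f k x + pd2 f i j x * pd2 f k m x) * (1 + gradSq f x)
        - pd2 f i j x * pd f k x * (∑ r, 2 * pd f r x * pd2 f r m x))
        / (1 + gradSq f x) ^ 2 := by
  have dA : DifferentiableAt ℝ (pd2 f i j) x :=
    ((contDiff_pd2 hf i j).differentiable (by simp)).differentiableAt
  have dB : DifferentiableAt ℝ (pd f k) x :=
    ((contDiff_pd hf k).differentiable (by simp)).differentiableAt
  have dU : DifferentiableAt ℝ (fun y => 1 + gradSq f y) x :=
    (differentiableAt_const _).add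
      (((contDiff_gradSq hf).differentiable (by simp)).differentiableAt)
  have hU : (1 + gradSq f x) ≠ 0 := u_ne f x
  have h1 : Gam f i j k = fun y => (pd2 f i j y * pd f k y) * (fun z => (1 + gradSq f z)⁻¹) y := by
    funext y; simp [Gam, div_eq_mul_inv]
  rw [h1, pd_mul (g := fun y => pd2 f i j y * pd f k y) (h := fun z => (1 + gradSq f z)⁻¹)
    (dA.mul dB) (dU.inv hU) m, pd_mul dA dB m,
    pd_inv dU hU m, pd_const_add, pd_gradSq hf m]
  simp only [pd2]
  generalize (∑ r, 2 * pd f r x * pd (pd f r) m x) = W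
  generalize pd (pd (pd f i) j) m x = T
  field_simp
  ring


theorem graph_algebra {n : ℕ} (p : Fin n → ℝ) (a : Fin n → Fin n → ℝ) (u : ℝ)
    (b : Fin n → ℝ) (Tr B C S : ℝ)
    (hu : u ≠ 0) (ha : ∀ i j, a i j = a j i)
    (hb : ∀ i, b i = ∑ k, a i k * p k)
    (hTr : Tr = ∑ i, a i i) (hB : B = ∑ i, b i * p i) (hC : C = ∑ i, b i * b i)
    (hS : S = ∑ i, ∑ j, a i j * a i j) :
    ∑ i, ∑ j, ((if i = j then (1 : ℝ) else 0) - p i * p j / u) *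
      ((∑ k, (a i j * a k k * u - a i j * p k * (∑ r, 2 * p r * a r k)
            - (a i k * a k j * u - a i k * p k * (∑ r, 2 * p r * a r j))) / u ^ 2)
        + (∑ k, ∑ l, a i j * p l / u * (a k l * p k / u))
        - (∑ k, ∑ l, a i k * p l / u * (a j l * p k / u)))
    = u⁻¹ * ((∑ i, a i i) ^ 2 - (∑ i, ∑ j, (a i j) ^ 2)
        - 2 / u * ∑ j, ∑ k, p j * p k * ((∑ i, a i i) * a j k - ∑ i, a i j * a i k)) := by
  have hb' : ∀ k, (∑ r, a r k * p r) = b k := by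
    intro k
    rw [hb k]
    exact Finset.sum_congr rfl fun r _ => by rw [ha r k]
  have hw : ∀ m, (∑ r, 2 * p r * a r m) = 2 * b m := by
    intro m
    rw [← hb' m, Finset.mul_sum]
    exact Finset.sum_congr rfl fun r _ => by ring
  -- the first piece of the bracket
  have h1 : ∀ i j : Fin n,
      (∑ k, (a i j * a k k * u - a i j * p k * (∑ r, 2 * p r * a r k)
            - (a i k * a k j * u - a i k * p k * (∑ r, 2 * p r * a r j))) / u ^ 2)
      = (u * Tr * a i j - 2 * a i j * B - u * (∑ k, a i k * a k j) + 2 * b j * b i) / u ^ 2 := by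
    intro i j
    rw [← Finset.sum_div]
    congr 1
    calc ∑ k, (a i j * a k k * u - a i j * p k * (∑ r, 2 * p r * a r k)
            - (a i k * a k j * u - a i k * p k * (∑ r, 2 * p r * a r j)))
        = ∑ k, ((u * a i j) * a k k - (2 * a i j) * (b k * p k) - u * (a i k * a k j)
            + (2 * b j) * (a i k * p k)) := by
          refine Finset.sum_congr rfl fun k _ => ?_
          rw [hw k, hw j]; ring
      _ = (u * a i j) * (∑ k, a k k) - (2 * a i j) * (∑ k, b k * p k)
            - u * (∑ k, a i k * a k j) + (2 * b j) * (∑ k, a i k * p k) := by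
          simp only [Finset.sum_add_distrib, Finset.sum_sub_distrib, ← Finset.mul_sum]
      _ = u * Tr * a i j - 2 * a i j * B - u * (∑ k, a i k * a k j) + 2 * b j * b i := by
          rw [← hTr, ← hB, ← hb i]; ring
  -- second piece
  have h2 : ∀ i j : Fin n,
      (∑ k, ∑ l, a i j * p l / u * (a k l * p k / u)) = a i j * B / u ^ 2 := by
    intro i j
    rw [Finset.sum_comm]
    calc ∑ l, ∑ k, a i j * p l / u * (a k l * p k / u)
        = ∑ l, a i j / u ^ 2 * (b l * p l) := by
          refine Finset.sum_congr rfl fun l _ => ?_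
          rw [← hb' l, Finset.sum_mul, Finset.mul_sum]
          exact Finset.sum_congr rfl fun k _ => by ring
      _ = a i j / u ^ 2 * B := by rw [← Finset.mul_sum, ← hB]
      _ = a i j * B / u ^ 2 := by ring
  -- third piece
  have h3 : ∀ i j : Fin n,
      (∑ k, ∑ l, a i k * p l / u * (a j l * p k / u)) = b i * b j / u ^ 2 := by
    intro i j
    calc ∑ k, ∑ l, a i k * p l / u * (a j l * p k / u)
        = ∑ k, (a i k * p k) * b j / u ^ 2 := by
          refine Finset.sum_congr rfl fun k _ => ?_
          rw [show (∑ l, a i k * p l / u * (a j l * p k / u))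
              = ∑ l, (a i k * p k) / u ^ 2 * (a j l * p l) from
            Finset.sum_congr rfl fun l _ => by ring]
          rw [← Finset.mul_sum, ← hb j]
          ring
      _ = b i * b j / u ^ 2 := by
          rw [← Finset.sum_div, ← Finset.sum_mul, ← hb i]
  -- contractions
  have hpa : ∑ i, ∑ j, p i * p j * a i j = B := by
    rw [hB]
    refine Finset.sum_congr rfl fun i _ => ?_
    rw [hb i, Finset.sum_mul]
    exact Finset.sum_congr rfl fun j _ => by ring
  have hpc : ∑ i, ∑ j, p i * p j * (∑ k, a i k * a k j) = C := by
    calc ∑ i, ∑ j, p i * p j * (∑ k, a i k * a k j)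
        = ∑ i, ∑ k, ∑ j, p i * p j * (a i k * a k j) := by
          refine Finset.sum_congr rfl fun i _ => ?_
          rw [show (∑ j, p i * p j * (∑ k, a i k * a k j))
              = ∑ j, ∑ k, p i * p j * (a i k * a k j) from
            Finset.sum_congr rfl fun j _ => Finset.mul_sum _ _ _]
          exact Finset.sum_comm
      _ = ∑ k, ∑ i, ∑ j, p i * p j * (a i k * a k j) := Finset.sum_comm
      _ = ∑ k, (∑ i, a i k * p i) * (∑ j, a k j * p j) := by
          refine Finset.sum_congr rfl fun k _ => ?_
          rw [Finset.sum_mul_sum]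
          exact Finset.sum_congr rfl fun i _ => Finset.sum_congr rfl fun j _ => by ring
      _ = ∑ k, b k * b k := by
          refine Finset.sum_congr rfl fun k _ => ?_
          rw [hb' k, ← hb k]
      _ = C := hC.symm
  have hpb : ∑ i, ∑ j, p i * p j * (b i * b j) = B * B := by
    rw [hB, Finset.sum_mul_sum]
    exact Finset.sum_congr rfl fun i _ => Finset.sum_congr rfl fun j _ => by ring
  have hq2 : ∑ j, ∑ k, p j * p k * (∑ i, a i j * a i k) = C := by
    calc ∑ j, ∑ k, p j * p k * (∑ i, a i j * a i k)
        = ∑ j, ∑ i, ∑ k, p j * p k * (a i j * a i k) := by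
          refine Finset.sum_congr rfl fun j _ => ?_
          rw [show (∑ k, p j * p k * (∑ i, a i j * a i k))
              = ∑ k, ∑ i, p j * p k * (a i j * a i k) from
            Finset.sum_congr rfl fun k _ => Finset.mul_sum _ _ _]
          exact Finset.sum_comm
      _ = ∑ i, ∑ j, ∑ k, p j * p k * (a i j * a i k) := Finset.sum_comm
      _ = ∑ i, (∑ j, a i j * p j) * (∑ k, a i k * p k) := by
          refine Finset.sum_congr rfl fun i _ => ?_
          rw [Finset.sum_mul_sum]
          exact Finset.sum_congr rfl fun j _ => Finset.sum_congr rfl fun k _ => by ring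
      _ = C := by
          rw [hC]
          exact Finset.sum_congr rfl fun i _ => by rw [← hb i]
  -- assemble bracket
  have hbr : ∀ i j : Fin n,
      ((∑ k, (a i j * a k k * u - a i j * p k * (∑ r, 2 * p r * a r k)
            - (a i k * a k j * u - a i k * p k * (∑ r, 2 * p r * a r j))) / u ^ 2)
        + (∑ k, ∑ l, a i j * p l / u * (a k l * p k / u))
        - (∑ k, ∑ l, a i k * p l / u * (a j l * p k / u)))
      = (u * (Tr * a i j - (∑ k, a i k * a k j)) + b i * b j - B * a i j) / u ^ 2 := by
    intro i j
    rw [h1 i j, h2 i j, h3 i j]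
    field_simp
    ring
  calc ∑ i, ∑ j, ((if i = j then (1 : ℝ) else 0) - p i * p j / u) *
      ((∑ k, (a i j * a k k * u - a i j * p k * (∑ r, 2 * p r * a r k)
            - (a i k * a k j * u - a i k * p k * (∑ r, 2 * p r * a r j))) / u ^ 2)
        + (∑ k, ∑ l, a i j * p l / u * (a k l * p k / u))
        - (∑ k, ∑ l, a i k * p l / u * (a j l * p k / u)))
      = ∑ i, ∑ j, ((if i = j then (1 : ℝ) else 0) - p i * p j / u) *
          ((u * (Tr * a i j - (∑ k, a i k * a k j)) + b i * b j - B * a i j) / u ^ 2) := by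
        exact Finset.sum_congr rfl fun i _ => Finset.sum_congr rfl fun j _ => by rw [hbr i j]
    _ = (∑ i, (u * (Tr * a i i - (∑ k, a i k * a k i)) + b i * b i - B * a i i) / u ^ 2)
        - ∑ i, ∑ j, p i * p j / u *
            ((u * (Tr * a i j - (∑ k, a i k * a k j)) + b i * b j - B * a i j) / u ^ 2) := by
        simp only [sub_mul, Finset.sum_sub_distrib, ite_mul, one_mul, zero_mul,
          Finset.sum_ite_eq, Finset.mem_univ, if_true]
    _ = (u * (Tr * Tr - S) + C - B * Tr) / u ^ 2 - (Tr * B - C) / u ^ 2 := by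
        congr 1
        · rw [← Finset.sum_div]
          congr 1
          calc ∑ i, (u * (Tr * a i i - (∑ k, a i k * a k i)) + b i * b i - B * a i i)
              = ∑ i, ((u * Tr) * a i i - u * (∑ k, a i k * a i k) + b i * b i - B * a i i) := by
                refine Finset.sum_congr rfl fun i _ => ?_
                rw [show (∑ k, a i k * a k i) = ∑ k, a i k * a i k from
                  Finset.sum_congr rfl fun k _ => by rw [ha k i]]
                ring
            _ = (u * Tr) * (∑ i, a i i) - u * (∑ i, ∑ k, a i k * a i k)
                + (∑ i, b i * b i) - B * (∑ i, a i i) := by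
                simp only [Finset.sum_add_distrib, Finset.sum_sub_distrib, ← Finset.mul_sum]
            _ = u * (Tr * Tr - S) + C - B * Tr := by
                rw [← hTr, ← hC, ← hS]; ring
        · calc ∑ i, ∑ j, p i * p j / u *
                ((u * (Tr * a i j - (∑ k, a i k * a k j)) + b i * b j - B * a i j) / u ^ 2)
              = ∑ i, ∑ j, ((u * Tr) * (p i * p j * a i j)
                  - u * (p i * p j * (∑ k, a i k * a k j))
                  + p i * p j * (b i * b j) - B * (p i * p j * a i j)) / u ^ 3 := by
                refine Finset.sum_congr rfl fun i _ => Finset.sum_congr rfl fun j _ => ?_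
                field_simp
            _ = ((u * Tr) * (∑ i, ∑ j, p i * p j * a i j)
                  - u * (∑ i, ∑ j, p i * p j * (∑ k, a i k * a k j))
                  + (∑ i, ∑ j, p i * p j * (b i * b j))
                  - B * (∑ i, ∑ j, p i * p j * a i j)) / u ^ 3 := by
                simp only [← Finset.sum_div, Finset.sum_add_distrib, Finset.sum_sub_distrib,
                  ← Finset.mul_sum]
            _ = ((u * Tr) * B - u * C + B * B - B * B) / u ^ 3 := by
                rw [hpa, hpc, hpb]
            _ = (Tr * B - C) / u ^ 2 := by
                field_simp
                ring
    _ = u⁻¹ * ((∑ i, a i i) ^ 2 - (∑ i, ∑ j, (a i j) ^ 2)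
        - 2 / u * ∑ j, ∑ k, p j * p k * ((∑ i, a i i) * a j k - ∑ i, a i j * a i k)) := by
        have hS' : (∑ i, ∑ j, (a i j) ^ 2) = S := by
          rw [hS]
          exact Finset.sum_congr rfl fun i _ => Finset.sum_congr rfl fun j _ => by ring
        have hcontr : (∑ j, ∑ k, p j * p k * ((∑ i, a i i) * a j k - ∑ i, a i j * a i k))
            = Tr * B - C := by
          calc ∑ j, ∑ k, p j * p k * ((∑ i, a i i) * a j k - ∑ i, a i j * a i k)
              = ∑ j, ∑ k, (Tr * (p j * p k * a j k) - p j * p k * (∑ i, a i j * a i k)) := by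
                refine Finset.sum_congr rfl fun j _ => Finset.sum_congr rfl fun k _ => ?_
                rw [← hTr]; ring
            _ = Tr * (∑ j, ∑ k, p j * p k * a j k)
                - (∑ j, ∑ k, p j * p k * (∑ i, a i j * a i k)) := by
                simp only [Finset.sum_sub_distrib, ← Finset.mul_sum]
            _ = Tr * B - C := by rw [hpa, hq2]
        rw [hS', hcontr, ← hTr]
        field_simp
        ring


/-- the coordinate expression
`R = g^{ij}(Γ_{ij,k}^k - Γ_{ik,j}^k + Γ_{ij}^l Γ_{kl}^k - Γ_{ik}^l Γ_{jl}^k)`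
for the scalar curvature of the graph metric equals
`(1/(1+|∇f|²))[f_{ii}f_{jj} - f_{ij}f_{ij} - (2f_jf_k/(1+|∇f|²))(f_{ii}f_{jk} - f_{ij}f_{ik})]`. -/
theorem scalar_curvature_of_graph {n : ℕ} (f : EuclideanSpace ℝ (Fin n) → ℝ)
    (hf : ContDiff ℝ (⊤ : ℕ∞) f) (x : EuclideanSpace ℝ (Fin n)) :
    ∑ i, ∑ j, ((if i = j then (1 : ℝ) else 0) - pd f i x * pd f j x / (1 + gradSq f x)) *
        ((∑ k, pd (Gam f i j k) k x) - (∑ k, pd (Gam f i k k) j x)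
          + (∑ k, ∑ l, Gam f i j l x * Gam f k l k x)
          - (∑ k, ∑ l, Gam f i k l x * Gam f j l k x))
      = Rsc f x := by
  have hsa : ∀ i j : Fin n, pd2 f i j x = pd2 f j i x := fun i j => pd_symm hf i j
  have ht : ∀ i j k : Fin n, pd (pd2 f i j) k x = pd (pd2 f i k) j x := fun i j k =>
    pd_symm (contDiff_pd hf i) j k
  have hA : ∀ i j : Fin n,
      (∑ k, pd (Gam f i j k) k x) - (∑ k, pd (Gam f i k k) j x)
      = ∑ k, (pd2 f i j x * pd2 f k k x * (1 + gradSq f x)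
            - pd2 f i j x * pd f k x * (∑ r, 2 * pd f r x * pd2 f r k x)
            - (pd2 f i k x * pd2 f k j x * (1 + gradSq f x)
            - pd2 f i k x * pd f k x * (∑ r, 2 * pd f r x * pd2 f r j x)))
            / (1 + gradSq f x) ^ 2 := by
    intro i j
    rw [← Finset.sum_sub_distrib]
    refine Finset.sum_congr rfl fun k _ => ?_
    rw [pd_Gam hf i j k k, pd_Gam hf i k k j, ht i j k]
    ring
  calc ∑ i, ∑ j, ((if i = j then (1 : ℝ) else 0) - pd f i x * pd f j x / (1 + gradSq f x)) *
        ((∑ k, pd (Gam f i j k) k x) - (∑ k, pd (Gam f i k k) j x)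
          + (∑ k, ∑ l, Gam f i j l x * Gam f k l k x)
          - (∑ k, ∑ l, Gam f i k l x * Gam f j l k x))
      = ∑ i, ∑ j, ((if i = j then (1 : ℝ) else 0) - pd f i x * pd f j x / (1 + gradSq f x)) *
        ((∑ k, (pd2 f i j x * pd2 f k k x * (1 + gradSq f x)
            - pd2 f i j x * pd f k x * (∑ r, 2 * pd f r x * pd2 f r k x)
            - (pd2 f i k x * pd2 f k j x * (1 + gradSq f x)
            - pd2 f i k x * pd f k x * (∑ r, 2 * pd f r x * pd2 f r j x)))
            / (1 + gradSq f x) ^ 2)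
          + (∑ k, ∑ l, pd2 f i j x * pd f l x / (1 + gradSq f x)
              * (pd2 f k l x * pd f k x / (1 + gradSq f x)))
          - (∑ k, ∑ l, pd2 f i k x * pd f l x / (1 + gradSq f x)
              * (pd2 f j l x * pd f k x / (1 + gradSq f x)))) := by
        refine Finset.sum_congr rfl fun i _ => Finset.sum_congr rfl fun j _ => ?_
        rw [sub_add, ← hA i j]
        simp only [Gam]
        ring
    _ = Rsc f x := by
        have := graph_algebra (fun i => pd f i x) (fun i j => pd2 f i j x)
          (1 + gradSq f x) (fun i => ∑ k, pd2 f i k x * pd f k x)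
          (∑ i, pd2 f i i x) (∑ i, (∑ k, pd2 f i k x * pd f k x) * pd f i x)
          (∑ i, (∑ k, pd2 f i k x * pd f k x) * (∑ k, pd2 f i k x * pd f k x))
          (∑ i, ∑ j, pd2 f i j x * pd2 f i j x)
          (u_ne f x) hsa (fun i => rfl) rfl rfl rfl rfl
        rw [this]
        rfl
end
end

section
/- There exists no smooth spherically symmetric asymptotically flat function f on ℝⁿ whose graph (ℝⁿ, δ + df⊗df) has strictly negative scalar curvature everywhere. -/
open MeasureTheory Filter
open scoped Topology

noncomputable section

/-- `ω_{n-1}`, the (n-1)-dimensional volume of the unit sphere in `ℝⁿ`. -/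
def sphereVol (n : ℕ) : ℝ :=
  (μH[(n : ℝ) - 1] (Metric.sphere (0 : EuclideanSpace ℝ (Fin n)) 1)).toReal

/-- The mass flux integral `∫_{S_r} (f_{ii} f_j - f_{ij} f_i) ν_j dS_r` over the
coordinate sphere of radius `r`, with outward unit normal `ν_j = x_j / r`. -/
def flux {n : ℕ} (f : EuclideanSpace ℝ (Fin n) → ℝ) (r : ℝ) : ℝ :=
  ∫ x in Metric.sphere (0 : EuclideanSpace ℝ (Fin n)) r,
    (∑ j, ((∑ i, pd2 f i i x) * pd f j x - ∑ i, pd2 f i j x * pd f i x) * (x j / r))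
    ∂(μH[(n : ℝ) - 1])

/-- Asymptotic flatness of `f : ℝⁿ → ℝ`:  `f_i = O(|x|^{-p/2})` and
`|x| |f_{ij}| + |x|² |f_{ijk}| = O(|x|^{-p/2})` for some `p > (n-2)/2`. -/
def AsympFlat {n : ℕ} (f : EuclideanSpace ℝ (Fin n) → ℝ) : Prop :=
  ∃ p C : ℝ, p > ((n : ℝ) - 2) / 2 ∧
    ∀ x : EuclideanSpace ℝ (Fin n), 1 ≤ ‖x‖ →
      (∀ i, |pd f i x| ≤ C * ‖x‖ ^ (-(p / 2))) ∧
      (∀ i j k, ‖x‖ * |pd2 f i j x| + ‖x‖ ^ 2 * |pd (pd (pd f i) j) k x| ≤ C * ‖x‖ ^ (-(p / 2)))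

/-! ### Auxiliary machinery: orthogonal symmetries of the Hessian at the origin -/

/-- Reflection of the `i`-th coordinate, as a continuous linear map. -/
def reflCLM {n : ℕ} (i : Fin n) :
    EuclideanSpace ℝ (Fin n) →L[ℝ] EuclideanSpace ℝ (Fin n) :=
  LinearMap.toContinuousLinearMap
    { toFun := fun x => WithLp.toLp 2 (fun j => if j = i then -x j else x j)
      map_add' := by
        intro x y; ext j; by_cases h : j = i <;> simp [h, PiLp.add_apply] <;> ring
      map_smul' := by
        intro c x; ext j; by_cases h : j = i <;> simp [h, PiLp.smul_apply, smul_eq_mul] <;>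
          try ring }

lemma reflCLM_apply {n : ℕ} (i : Fin n) (x : EuclideanSpace ℝ (Fin n)) (j : Fin n) :
    reflCLM i x j = if j = i then -x j else x j := rfl

lemma reflCLM_norm {n : ℕ} (i : Fin n) (x : EuclideanSpace ℝ (Fin n)) :
    ‖reflCLM i x‖ = ‖x‖ := by
  rw [EuclideanSpace.norm_eq, EuclideanSpace.norm_eq]
  congr 1
  refine Finset.sum_congr rfl fun j _ => ?_
  by_cases h : j = i <;> simp [reflCLM_apply, h]

lemma reflCLM_single_self {n : ℕ} (i : Fin n) :
    reflCLM i (EuclideanSpace.single i 1) = -(EuclideanSpace.single i 1) := by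
  ext k
  simp only [reflCLM_apply, PiLp.neg_apply, EuclideanSpace.single_apply]
  by_cases h : k = i <;> simp [h]

lemma reflCLM_single_ne {n : ℕ} {i j : Fin n} (h : j ≠ i) :
    reflCLM i (EuclideanSpace.single j 1) = EuclideanSpace.single j 1 := by
  ext k
  simp only [reflCLM_apply, EuclideanSpace.single_apply]
  by_cases hk : k = i
  · subst hk
    rw [if_pos rfl, if_neg (show ¬k = j from fun hc => h hc.symm)]
    exact neg_zero
  · rw [if_neg hk]

/-- Transposition of coordinates `i` and `j`, as a continuous linear map. -/
def swapCLM {n : ℕ} (i j : Fin n) :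
    EuclideanSpace ℝ (Fin n) →L[ℝ] EuclideanSpace ℝ (Fin n) :=
  LinearMap.toContinuousLinearMap
    { toFun := fun x => WithLp.toLp 2 (fun k => x (Equiv.swap i j k))
      map_add' := by intro x y; ext k; simp [PiLp.add_apply]
      map_smul' := by intro c x; ext k; simp [PiLp.smul_apply] }

lemma swapCLM_apply {n : ℕ} (i j : Fin n) (x : EuclideanSpace ℝ (Fin n)) (k : Fin n) :
    swapCLM i j x k = x (Equiv.swap i j k) := rfl

lemma swapCLM_norm {n : ℕ} (i j : Fin n) (x : EuclideanSpace ℝ (Fin n)) :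
    ‖swapCLM i j x‖ = ‖x‖ := by
  rw [EuclideanSpace.norm_eq, EuclideanSpace.norm_eq]
  congr 1
  exact Equiv.sum_comp (Equiv.swap i j) (fun k => ‖x k‖ ^ 2)

lemma swapCLM_single {n : ℕ} (i j : Fin n) :
    swapCLM i j (EuclideanSpace.single i 1) = EuclideanSpace.single j 1 := by
  ext k
  simp only [swapCLM_apply, EuclideanSpace.single_apply]
  by_cases h : k = j
  · simp [h]
  · rw [if_neg h, if_neg]
    intro hc
    apply h
    have := congrArg (Equiv.swap i j) hc
    simpa using this

lemma sym_first {n : ℕ} {f : EuclideanSpace ℝ (Fin n) → ℝ} (hf : ContDiff ℝ (⊤ : ℕ∞) f)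
    (σ : EuclideanSpace ℝ (Fin n) →L[ℝ] EuclideanSpace ℝ (Fin n))
    (hσ : ∀ x, f (σ x) = f x) (x v : EuclideanSpace ℝ (Fin n)) :
    fderiv ℝ f x v = fderiv ℝ f (σ x) (σ v) := by
  have hcomp : f = f ∘ σ := by funext y; simp [Function.comp, hσ]
  have h := fderiv_comp (𝕜 := ℝ) x (hf.differentiable (by simp) (σ x)) σ.differentiableAt
  rw [σ.fderiv] at h
  conv_lhs => rw [hcomp]
  rw [h]
  rfl

lemma diff_dfv {n : ℕ} {f : EuclideanSpace ℝ (Fin n) → ℝ} (hf : ContDiff ℝ (⊤ : ℕ∞) f)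
    (v : EuclideanSpace ℝ (Fin n)) :
    Differentiable ℝ (fun x => fderiv ℝ f x v) := by
  have h1 : ContDiff ℝ (⊤ : ℕ∞) (fderiv ℝ f) := hf.fderiv_right (by simp)
  exact (ContinuousLinearMap.apply ℝ ℝ v).differentiable.comp (h1.differentiable (by simp))

lemma sym_second {n : ℕ} {f : EuclideanSpace ℝ (Fin n) → ℝ} (hf : ContDiff ℝ (⊤ : ℕ∞) f)
    (σ : EuclideanSpace ℝ (Fin n) →L[ℝ] EuclideanSpace ℝ (Fin n))
    (hσ : ∀ x, f (σ x) = f x) (v w : EuclideanSpace ℝ (Fin n)) :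
    fderiv ℝ (fun y => fderiv ℝ f y v) 0 w
      = fderiv ℝ (fun y => fderiv ℝ f y (σ v)) 0 (σ w) := by
  have hg : (fun y => fderiv ℝ f y v) = (fun y => fderiv ℝ f y (σ v)) ∘ σ := by
    funext y; exact sym_first hf σ hσ y v
  have h := fderiv_comp (𝕜 := ℝ) (0 : EuclideanSpace ℝ (Fin n))
      ((diff_dfv hf (σ v)) (σ 0)) σ.differentiableAt
  rw [σ.fderiv] at h
  conv_lhs => rw [hg]
  rw [h]
  simp only [ContinuousLinearMap.coe_comp', Function.comp_apply, map_zero]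

lemma neg_arg {n : ℕ} (f : EuclideanSpace ℝ (Fin n) → ℝ)
    (v w : EuclideanSpace ℝ (Fin n)) :
    fderiv ℝ (fun y => fderiv ℝ f y (-v)) 0 w
      = -(fderiv ℝ (fun y => fderiv ℝ f y v) 0 w) := by
  have : (fun y => fderiv ℝ f y (-v)) = fun y => -(fderiv ℝ f y v) := by
    funext y; simp
  rw [this, fderiv_fun_neg]
  simp

lemma pd2_eq {n : ℕ} (f : EuclideanSpace ℝ (Fin n) → ℝ) (i j : Fin n)
    (x : EuclideanSpace ℝ (Fin n)) :
    pd2 f i j x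
      = fderiv ℝ (fun y => fderiv ℝ f y (EuclideanSpace.single i 1)) x
          (EuclideanSpace.single j 1) := rfl

/-- there is no smooth spherically symmetric asymptotically flat function on
`ℝⁿ` whose graph has strictly negative scalar curvature everywhere. -/
theorem no_radial_graph_negative_scalar {n : ℕ} (hn : 3 ≤ n) :
    ¬ ∃ (f : EuclideanSpace ℝ (Fin n) → ℝ) (F : ℝ → ℝ),
        ContDiff ℝ (⊤ : ℕ∞) f ∧ (∀ x, f x = F ‖x‖) ∧ AsympFlat f ∧ (∀ x, Rsc f x < 0) := by
  rintro ⟨f, F, hf, hF, -, hR⟩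
  have hrefl : ∀ (i : Fin n) (x : EuclideanSpace ℝ (Fin n)), f (reflCLM i x) = f x := by
    intro i x; rw [hF, hF, reflCLM_norm]
  have hswap : ∀ (i j : Fin n) (x : EuclideanSpace ℝ (Fin n)), f (swapCLM i j x) = f x := by
    intro i j x; rw [hF, hF, swapCLM_norm]
  -- first derivatives vanish at the origin
  have hpd0 : ∀ j : Fin n, pd f j 0 = 0 := by
    intro j
    have h := sym_first hf (reflCLM j) (hrefl j) 0 (EuclideanSpace.single j 1)
    rw [map_zero, reflCLM_single_self, map_neg] at h
    have : pd f j 0 = -(pd f j 0) := h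
    linarith
  -- off-diagonal second derivatives vanish at the origin
  have hoff : ∀ i j : Fin n, j ≠ i → pd2 f i j 0 = 0 := by
    intro i j hij
    have h := sym_second hf (reflCLM i) (hrefl i)
        (EuclideanSpace.single i 1) (EuclideanSpace.single j 1)
    rw [reflCLM_single_self, reflCLM_single_ne hij, neg_arg] at h
    have h2 : pd2 f i j 0 = -(pd2 f i j 0) := by
      rw [pd2_eq]; exact h
    linarith
  -- diagonal second derivatives are all equal
  have hdiag : ∀ i j : Fin n, pd2 f i i 0 = pd2 f j j 0 := by
    intro i j
    have h := sym_second hf (swapCLM i j) (hswap i j)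
        (EuclideanSpace.single i 1) (EuclideanSpace.single i 1)
    rw [swapCLM_single] at h
    rw [pd2_eq, pd2_eq]
    exact h
  -- now compute the scalar curvature at the origin
  have hn0 : 0 < n := by omega
  set i0 : Fin n := ⟨0, hn0⟩
  set lam : ℝ := pd2 f i0 i0 0 with hlam
  have hgrad : gradSq f 0 = 0 := by
    unfold gradSq
    exact Finset.sum_eq_zero fun i _ => by rw [hpd0]; ring
  have hsum3 : (∑ j, ∑ k, pd f j (0 : EuclideanSpace ℝ (Fin n)) * pd f k 0 *
      ((∑ i, pd2 f i i 0) * pd2 f j k 0 - ∑ i, pd2 f i j 0 * pd2 f i k 0)) = 0 := by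
    refine Finset.sum_eq_zero fun j _ => Finset.sum_eq_zero fun k _ => ?_
    rw [hpd0 j]; ring
  have hsum1 : (∑ i, pd2 f i i (0 : EuclideanSpace ℝ (Fin n))) = n * lam := by
    rw [Finset.sum_congr rfl (fun i _ => hdiag i i0)]
    simp [Finset.card_univ, mul_comm, hlam]
  have hsum2 : (∑ i, ∑ j, (pd2 f i j (0 : EuclideanSpace ℝ (Fin n))) ^ 2) = n * lam ^ 2 := by
    have hinner : ∀ i : Fin n, (∑ j, (pd2 f i j (0 : EuclideanSpace ℝ (Fin n))) ^ 2) = lam ^ 2 := by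
      intro i
      rw [Finset.sum_eq_single i (fun j _ hj => by rw [hoff i j hj]; ring)
        (fun h => absurd (Finset.mem_univ i) h)]
      rw [hdiag i i0]
    rw [Finset.sum_congr rfl (fun i _ => hinner i)]
    simp [Finset.card_univ, mul_comm]
  have hval : Rsc f 0 = (n : ℝ) * ((n : ℝ) - 1) * lam ^ 2 := by
    unfold Rsc
    rw [hgrad, hsum3, hsum1, hsum2]
    norm_num
    ring
  have hge : 0 ≤ Rsc f 0 := by
    rw [hval]
    have h3 : (3 : ℝ) ≤ (n : ℝ) := by exact_mod_cast hn
    exact mul_nonneg (mul_nonneg (by linarith) (by linarith)) (sq_nonneg lam)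
  exact absurd (hR 0) (not_lt.2 hge)
end
end
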